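/- Let B = B'⊕B'', C = C'⊕C'' over a field k, let W' ⊆ B'⊗C' and W'' ⊆ B''⊗C'' be linear subspaces, W = W'⊕W'', and fix a minimal decomposition V of W with the associated minimal subspaces E', E'', F', F'' of dimensions e', e'', f', f''. If R(W) < R(W') + R(W''), then e' < R(W') − dim W', f' < R(W') − dim W', e'' < R(W'') − dim W'', and f'' < R(W'') − dim W''. -/

import Mathlib

open TensorProduct Module

noncomputable section

variable (k : Type*) [Field k]

/-- The rank of a linear subspace `W ⊆ B⊗C`: the minimal number `r` of rank-one
tensors whose span contains `W`. -/
def sRank {B C : Type*} [AddCommGroup B] [Module k B]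
    [AddCommGroup C] [Module k C] (W : Submodule k (B ⊗[k] C)) : ℕ :=
  sInf {r : ℕ | ∃ (b : Fin r → B) (c : Fin r → C),
    W ≤ Submodule.span k (Set.range fun i => b i ⊗ₜ[k] c i)}

variable (B' B'' C' C'' : Type*)
  [AddCommGroup B'] [Module k B'] [AddCommGroup B''] [Module k B'']
  [AddCommGroup C'] [Module k C'] [AddCommGroup C''] [Module k C'']

/-- Inclusion of `B'⊗C'` into `(B'⊕B'')⊗(C'⊕C'')`. -/
def incl2L : (B' ⊗[k] C') →ₗ[k] ((B' × B'') ⊗[k] (C' × C'')) :=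
  TensorProduct.map (LinearMap.inl k B' B'') (LinearMap.inl k C' C'')

/-- Inclusion of `B''⊗C''` into `(B'⊕B'')⊗(C'⊕C'')`. -/
def incl2R : (B'' ⊗[k] C'') →ₗ[k] ((B' × B'') ⊗[k] (C' × C'')) :=
  TensorProduct.map (LinearMap.inr k B' B'') (LinearMap.inr k C' C'')

/-- The projection `π_{C'} : B⊗C → B⊗C''` with kernel `B⊗C'`. -/
def projC' : ((B' × B'') ⊗[k] (C' × C'')) →ₗ[k] ((B' × B'') ⊗[k] C'') :=
  TensorProduct.map LinearMap.id (LinearMap.snd k C' C'')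

/-- The projection `π_{C''} : B⊗C → B⊗C'` with kernel `B⊗C''`. -/
def projC'' : ((B' × B'') ⊗[k] (C' × C'')) →ₗ[k] ((B' × B'') ⊗[k] C') :=
  TensorProduct.map LinearMap.id (LinearMap.fst k C' C'')

/-- The projection `π_{B'} : B⊗C → B''⊗C` with kernel `B'⊗C`. -/
def projB' : ((B' × B'') ⊗[k] (C' × C'')) →ₗ[k] (B'' ⊗[k] (C' × C'')) :=
  TensorProduct.map (LinearMap.snd k B' B'') LinearMap.id

/-- The projection `π_{B''} : B⊗C → B'⊗C` with kernel `B''⊗C`. -/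
def projB'' : ((B' × B'') ⊗[k] (C' × C'')) →ₗ[k] (B' ⊗[k] (C' × C'')) :=
  TensorProduct.map (LinearMap.fst k B' B'') LinearMap.id

/-- `π_{C'}(V) ⊆ (E₀⊕B'')⊗C''` for a subspace `E₀ ⊆ B'`. -/
def CondE' (V : Submodule k ((B' × B'') ⊗[k] (C' × C''))) (E₀ : Submodule k B') : Prop :=
  Submodule.map (projC' k B' B'' C' C'') V ≤
    LinearMap.range (TensorProduct.map (E₀.prod (⊤ : Submodule k B'')).subtype
      (LinearMap.id : C'' →ₗ[k] C''))

/-- `π_{C''}(V) ⊆ (B'⊕E₀)⊗C'` for a subspace `E₀ ⊆ B''`. -/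
def CondE'' (V : Submodule k ((B' × B'') ⊗[k] (C' × C''))) (E₀ : Submodule k B'') : Prop :=
  Submodule.map (projC'' k B' B'' C' C'') V ≤
    LinearMap.range (TensorProduct.map ((⊤ : Submodule k B').prod E₀).subtype
      (LinearMap.id : C' →ₗ[k] C'))

/-- `π_{B'}(V) ⊆ B''⊗(F₀⊕C'')` for a subspace `F₀ ⊆ C'`. -/
def CondF' (V : Submodule k ((B' × B'') ⊗[k] (C' × C''))) (F₀ : Submodule k C') : Prop :=
  Submodule.map (projB' k B' B'' C' C'') V ≤
    LinearMap.range (TensorProduct.map (LinearMap.id : B'' →ₗ[k] B'')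
      (F₀.prod (⊤ : Submodule k C'')).subtype)

/-- `π_{B''}(V) ⊆ B'⊗(C'⊕F₀)` for a subspace `F₀ ⊆ C''`. -/
def CondF'' (V : Submodule k ((B' × B'') ⊗[k] (C' × C''))) (F₀ : Submodule k C'') : Prop :=
  Submodule.map (projB'' k B' B'' C' C'') V ≤
    LinearMap.range (TensorProduct.map (LinearMap.id : B' →ₗ[k] B')
      ((⊤ : Submodule k C').prod F₀).subtype)


section AuxiliaryLemmas

variable {K : Type*} [Field K]

lemma crux_left {B C A B₁ : Type*}
    [AddCommGroup B] [Module K B] [AddCommGroup C] [Module K C]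
    [AddCommGroup A] [Module K A] [AddCommGroup B₁] [Module K B₁]
    {ι : Type*} [Fintype ι] (b : ι → B) (c : ι → C)
    (P : Submodule K (B ⊗[K] C))
    (hP : P = Submodule.span K (Set.range fun i => b i ⊗ₜ[K] c i))
    (ρ : B →ₗ[K] B₁) (σ : A →ₗ[K] B) (π : B →ₗ[K] A)
    (hπσ : π ∘ₗ σ = LinearMap.id) (hρσ : ρ ∘ₗ σ = 0)
    (W₀ : Submodule K (A ⊗[K] C))
    (hW₀ : W₀.map (TensorProduct.map σ LinearMap.id) ≤ P)
    (e : ℕ)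
    (hmin : ∀ D : Submodule K B₁,
      P ≤ LinearMap.range (TensorProduct.map (D.comap ρ).subtype (LinearMap.id : C →ₗ[K] C)) →
      e ≤ finrank K D) :
    sRank K W₀ + e ≤ Fintype.card ι := by
  classical
  set D : Submodule K B₁ := Submodule.span K (Set.range (⇑ρ ∘ b)) with hD
  have hPD : P ≤ LinearMap.range
      (TensorProduct.map (D.comap ρ).subtype (LinearMap.id : C →ₗ[K] C)) := by
    rw [hP, Submodule.span_le]
    rintro _ ⟨i, rfl⟩
    exact ⟨(⟨b i, Submodule.mem_comap.mpr (Submodule.subset_span ⟨i, rfl⟩)⟩ :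
      D.comap ρ) ⊗ₜ[K] c i, by simp⟩
  have he : e ≤ finrank K D := hmin D hPD
  obtain ⟨t, hts, hspan, hli⟩ := exists_linearIndependent K (Set.range (⇑ρ ∘ b))
  have htfin : t.Finite := (Set.finite_range _).subset hts
  haveI : Fintype t := htfin.fintype
  have hpick : ∀ x : t, ∃ i, ρ (b i) = (x : B₁) := fun x => hts x.2
  choose u hu using hpick
  have huinj : Function.Injective u := fun x y hxy =>
    Subtype.ext (by rw [← hu x, ← hu y, hxy])
  let f₀ : (LinearIndepOn.extend (v := id) (s := t) hli (Set.subset_univ t)) → A :=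
    fun y => if h : (y : B₁) ∈ t then -π (b (u ⟨y, h⟩)) else 0
  set g : B₁ →ₗ[K] A := (Module.Basis.extend hli).constr K f₀ with hgdef
  have hg : ∀ x : t, g (x : B₁) = -π (b (u x)) := by
    intro x
    have hxe : (x : B₁) ∈ LinearIndepOn.extend (v := id) (s := t) hli (Set.subset_univ t) := LinearIndepOn.subset_extend (v := id) (s := t) hli _ x.2
    have h1 : (Module.Basis.extend hli) ⟨(x : B₁), hxe⟩ = (x : B₁) := Module.Basis.extend_apply_self hli _
    have h2 := (Module.Basis.extend hli).constr_basis K f₀ ⟨(x : B₁), hxe⟩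
    rw [h1] at h2
    rw [hgdef, h2]
    simp only [f₀, dif_pos x.2, Subtype.coe_eta]
  set φ : B →ₗ[K] A := π + g ∘ₗ ρ with hφ
  have hφσ : φ ∘ₗ σ = LinearMap.id := by
    apply LinearMap.ext; intro a
    have h1' : π (σ a) = a := by
      have := LinearMap.ext_iff.mp hπσ a; simpa using this
    have h2 : ρ (σ a) = 0 := by
      have := LinearMap.ext_iff.mp hρσ a; simpa using this
    simp [hφ, h1', h2]
  have hkill : ∀ x : t, φ (b (u x)) = 0 := by
    intro x
    have : φ (b (u x)) = π (b (u x)) + g (ρ (b (u x))) := by simp [hφ]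
    rw [this, hu x, hg x, add_neg_cancel]
  set J : Finset ι := Finset.univ.image (fun x : t => u x) with hJ
  set Kc : Finset ι := Finset.univ \ J with hKc
  have hcomp : TensorProduct.map φ (LinearMap.id : C →ₗ[K] C) ∘ₗ
      TensorProduct.map σ LinearMap.id = LinearMap.id := by
    rw [← TensorProduct.map_comp, hφσ, LinearMap.id_comp, TensorProduct.map_id]
  have hW₀P : W₀ ≤ Submodule.map (TensorProduct.map φ LinearMap.id) P := by
    have h := Submodule.map_mono (f := TensorProduct.map φ (LinearMap.id : C →ₗ[K] C)) hW₀
    rwa [← Submodule.map_comp, hcomp, Submodule.map_id] at h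
  have himg : Submodule.map (TensorProduct.map φ LinearMap.id) P ≤
      Submodule.span K (Set.range fun j : {x // x ∈ Kc} => φ (b ↑j) ⊗ₜ[K] c ↑j) := by
    rw [hP, Submodule.map_span, Submodule.span_le]
    rintro _ ⟨_, ⟨i, rfl⟩, rfl⟩
    simp only [TensorProduct.map_tmul, LinearMap.id_coe, id_eq]
    by_cases hi : i ∈ J
    · obtain ⟨x, -, hx⟩ := Finset.mem_image.mp hi
      rw [← hx, hkill x, TensorProduct.zero_tmul]
      exact Submodule.zero_mem _
    · exact Submodule.subset_span ⟨⟨i, by simp [hKc, hi]⟩, rfl⟩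
  have hsr : sRank K W₀ ≤ Kc.card := by
    have hmem : Kc.card ∈ {r : ℕ | ∃ (b' : Fin r → A) (c' : Fin r → C),
        W₀ ≤ Submodule.span K (Set.range fun i => b' i ⊗ₜ[K] c' i)} := by
      refine ⟨fun j => φ (b ↑(Kc.equivFin.symm j)), fun j => c ↑(Kc.equivFin.symm j), ?_⟩
      refine le_trans (le_trans hW₀P himg) (Submodule.span_mono ?_)
      rintro _ ⟨x, rfl⟩
      exact ⟨Kc.equivFin x, by simp⟩
    exact Nat.sInf_le hmem
  have hJt : J.card = t.toFinset.card := by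
    rw [hJ, Finset.card_image_of_injective _ huinj, Finset.card_univ, Set.toFinset_card]
  have het : e ≤ J.card := by
    rw [hJt, ← finrank_span_set_eq_card hli]
    have hDt : D = Submodule.span K t := by rw [hD, ← hspan]
    rw [← hDt]; exact he
  have hJu : J.card ≤ Fintype.card ι := by
    rw [← Finset.card_univ]; exact Finset.card_le_card (Finset.subset_univ J)
  have hKJ : Kc.card + J.card = Fintype.card ι := by
    rw [hKc, Finset.card_sdiff_of_subset (Finset.subset_univ J), Finset.card_univ,
      Nat.sub_add_cancel hJu]
  omega

lemma crux_right {B C A C₁ : Type*}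
    [AddCommGroup B] [Module K B] [AddCommGroup C] [Module K C]
    [AddCommGroup A] [Module K A] [AddCommGroup C₁] [Module K C₁]
    {ι : Type*} [Fintype ι] (b : ι → B) (c : ι → C)
    (P : Submodule K (B ⊗[K] C))
    (hP : P = Submodule.span K (Set.range fun i => b i ⊗ₜ[K] c i))
    (ρ : C →ₗ[K] C₁) (σ : A →ₗ[K] C) (π : C →ₗ[K] A)
    (hπσ : π ∘ₗ σ = LinearMap.id) (hρσ : ρ ∘ₗ σ = 0)
    (W₀ : Submodule K (B ⊗[K] A))
    (hW₀ : W₀.map (TensorProduct.map LinearMap.id σ) ≤ P)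
    (e : ℕ)
    (hmin : ∀ D : Submodule K C₁,
      P ≤ LinearMap.range (TensorProduct.map (LinearMap.id : B →ₗ[K] B) (D.comap ρ).subtype) →
      e ≤ finrank K D) :
    sRank K W₀ + e ≤ Fintype.card ι := by
  classical
  set D : Submodule K C₁ := Submodule.span K (Set.range (⇑ρ ∘ c)) with hD
  have hPD : P ≤ LinearMap.range
      (TensorProduct.map (LinearMap.id : B →ₗ[K] B) (D.comap ρ).subtype) := by
    rw [hP, Submodule.span_le]
    rintro _ ⟨i, rfl⟩
    exact ⟨b i ⊗ₜ[K] (⟨c i, Submodule.mem_comap.mpr (Submodule.subset_span ⟨i, rfl⟩)⟩ :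
      D.comap ρ), by simp⟩
  have he : e ≤ finrank K D := hmin D hPD
  obtain ⟨t, hts, hspan, hli⟩ := exists_linearIndependent K (Set.range (⇑ρ ∘ c))
  have htfin : t.Finite := (Set.finite_range _).subset hts
  haveI : Fintype t := htfin.fintype
  have hpick : ∀ x : t, ∃ i, ρ (c i) = (x : C₁) := fun x => hts x.2
  choose u hu using hpick
  have huinj : Function.Injective u := fun x y hxy =>
    Subtype.ext (by rw [← hu x, ← hu y, hxy])
  let f₀ : (LinearIndepOn.extend (v := id) (s := t) hli (Set.subset_univ t)) → A :=
    fun y => if h : (y : C₁) ∈ t then -π (c (u ⟨y, h⟩)) else 0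
  set g : C₁ →ₗ[K] A := (Module.Basis.extend hli).constr K f₀ with hgdef
  have hg : ∀ x : t, g (x : C₁) = -π (c (u x)) := by
    intro x
    have hxe : (x : C₁) ∈ LinearIndepOn.extend (v := id) (s := t) hli (Set.subset_univ t) := LinearIndepOn.subset_extend (v := id) (s := t) hli _ x.2
    have h1 : (Module.Basis.extend hli) ⟨(x : C₁), hxe⟩ = (x : C₁) := Module.Basis.extend_apply_self hli _
    have h2 := (Module.Basis.extend hli).constr_basis K f₀ ⟨(x : C₁), hxe⟩
    rw [h1] at h2
    rw [hgdef, h2]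
    simp only [f₀, dif_pos x.2, Subtype.coe_eta]
  set φ : C →ₗ[K] A := π + g ∘ₗ ρ with hφ
  have hφσ : φ ∘ₗ σ = LinearMap.id := by
    apply LinearMap.ext; intro a
    have h1' : π (σ a) = a := by
      have := LinearMap.ext_iff.mp hπσ a; simpa using this
    have h2 : ρ (σ a) = 0 := by
      have := LinearMap.ext_iff.mp hρσ a; simpa using this
    simp [hφ, h1', h2]
  have hkill : ∀ x : t, φ (c (u x)) = 0 := by
    intro x
    have : φ (c (u x)) = π (c (u x)) + g (ρ (c (u x))) := by simp [hφ]
    rw [this, hu x, hg x, add_neg_cancel]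
  set J : Finset ι := Finset.univ.image (fun x : t => u x) with hJ
  set Kc : Finset ι := Finset.univ \ J with hKc
  have hcomp : TensorProduct.map (LinearMap.id : B →ₗ[K] B) φ ∘ₗ
      TensorProduct.map LinearMap.id σ = LinearMap.id := by
    rw [← TensorProduct.map_comp, hφσ, LinearMap.id_comp, TensorProduct.map_id]
  have hW₀P : W₀ ≤ Submodule.map (TensorProduct.map LinearMap.id φ) P := by
    have h := Submodule.map_mono (f := TensorProduct.map (LinearMap.id : B →ₗ[K] B) φ) hW₀
    rwa [← Submodule.map_comp, hcomp, Submodule.map_id] at h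
  have himg : Submodule.map (TensorProduct.map LinearMap.id φ) P ≤
      Submodule.span K (Set.range fun j : {x // x ∈ Kc} => b ↑j ⊗ₜ[K] φ (c ↑j)) := by
    rw [hP, Submodule.map_span, Submodule.span_le]
    rintro _ ⟨_, ⟨i, rfl⟩, rfl⟩
    simp only [TensorProduct.map_tmul, LinearMap.id_coe, id_eq]
    by_cases hi : i ∈ J
    · obtain ⟨x, -, hx⟩ := Finset.mem_image.mp hi
      rw [← hx, hkill x, TensorProduct.tmul_zero]
      exact Submodule.zero_mem _
    · exact Submodule.subset_span ⟨⟨i, by simp [hKc, hi]⟩, rfl⟩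
  have hsr : sRank K W₀ ≤ Kc.card := by
    have hmem : Kc.card ∈ {r : ℕ | ∃ (b' : Fin r → B) (c' : Fin r → A),
        W₀ ≤ Submodule.span K (Set.range fun i => b' i ⊗ₜ[K] c' i)} := by
      refine ⟨fun j => b ↑(Kc.equivFin.symm j), fun j => φ (c ↑(Kc.equivFin.symm j)), ?_⟩
      refine le_trans (le_trans hW₀P himg) (Submodule.span_mono ?_)
      rintro _ ⟨x, rfl⟩
      exact ⟨Kc.equivFin x, by simp⟩
    exact Nat.sInf_le hmem
  have hJt : J.card = t.toFinset.card := by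
    rw [hJ, Finset.card_image_of_injective _ huinj, Finset.card_univ, Set.toFinset_card]
  have het : e ≤ J.card := by
    rw [hJt, ← finrank_span_set_eq_card hli]
    have hDt : D = Submodule.span K t := by rw [hD, ← hspan]
    rw [← hDt]; exact he
  have hJu : J.card ≤ Fintype.card ι := by
    rw [← Finset.card_univ]; exact Finset.card_le_card (Finset.subset_univ J)
  have hKJ : Kc.card + J.card = Fintype.card ι := by
    rw [hKc, Finset.card_sdiff_of_subset (Finset.subset_univ J), Finset.card_univ,
      Nat.sub_add_cancel hJu]
  omega

lemma tmap_injective {B C B₂ C₂ : Type*}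
    [AddCommGroup B] [Module K B] [AddCommGroup C] [Module K C]
    [AddCommGroup B₂] [Module K B₂] [AddCommGroup C₂] [Module K C₂]
    (f : B →ₗ[K] B₂) (g : C →ₗ[K] C₂)
    (hf : Function.Injective f) (hg : Function.Injective g) :
    Function.Injective (TensorProduct.map f g) := by
  have h : TensorProduct.map f g =
      (LinearMap.lTensor B₂ g) ∘ₗ (LinearMap.rTensor C f) := by
    apply TensorProduct.ext'
    intro x y
    simp
  rw [h, LinearMap.coe_comp]
  exact Function.Injective.comp
    (Module.Flat.lTensor_preserves_injective_linearMap g hg)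
    (Module.Flat.rTensor_preserves_injective_linearMap f hf)

lemma ker_bound {M N L : Type*}
    [AddCommGroup M] [Module K M] [AddCommGroup N] [Module K N]
    [AddCommGroup L] [Module K L] [FiniteDimensional K M]
    (V : Submodule K M) (f : M →ₗ[K] N) (W₁ : Submodule K L) (j : L →ₗ[K] M)
    (hj : Function.Injective j) (h1 : Submodule.map j W₁ ≤ V) (h2 : f ∘ₗ j = 0) :
    finrank K W₁ ≤ finrank K ↥(V ⊓ LinearMap.ker f) := by
  have hle : Submodule.map j W₁ ≤ V ⊓ LinearMap.ker f := by
    refine le_inf h1 ?_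
    rintro _ ⟨w, hw, rfl⟩
    have h3 : (f ∘ₗ j) w = 0 := by rw [h2]; rfl
    simpa [LinearMap.mem_ker] using h3
  calc finrank K ↥W₁ = finrank K ↥(Submodule.map j W₁) :=
        LinearEquiv.finrank_eq (Submodule.equivMapOfInjective j hj W₁)
    _ ≤ _ := Submodule.finrank_mono hle

lemma assembly {X Y B C : Type*}
    [AddCommGroup X] [Module K X] [AddCommGroup Y] [Module K Y]
    [AddCommGroup B] [Module K B] [AddCommGroup C] [Module K C]
    [FiniteDimensional K X] [FiniteDimensional K Y]
    [FiniteDimensional K B] [FiniteDimensional K C]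
    (V : Submodule K (X ⊗[K] Y)) (S : Set (X ⊗[K] Y))
    (hS : ∀ v ∈ S, ∃ x y, v = x ⊗ₜ[K] y)
    (hV : V = Submodule.span K S)
    (f : (X ⊗[K] Y) →ₗ[K] (B ⊗[K] C))
    (hf : ∀ x y, ∃ b c, f (x ⊗ₜ[K] y) = b ⊗ₜ[K] c)
    (n e : ℕ)
    (hcrux : ∀ (m : ℕ) (b : Fin m → B) (c : Fin m → C),
      Submodule.map f V = Submodule.span K (Set.range fun i => b i ⊗ₜ[K] c i) →
      n + e ≤ m) :
    n + e + finrank K ↥(V ⊓ LinearMap.ker f) ≤ finrank K ↥V := by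
  classical
  have hPspan : Submodule.map f V = Submodule.span K (⇑f '' S) := by
    rw [hV, Submodule.map_span]
  have hS' : ∀ v ∈ ⇑f '' S, ∃ b c, v = b ⊗ₜ[K] c := by
    rintro _ ⟨v, hv, rfl⟩
    obtain ⟨x, y, rfl⟩ := hS v hv
    exact hf x y
  obtain ⟨t, hts, hspan, hli⟩ := exists_linearIndependent K (⇑f '' S)
  have htfin : t.Finite := hli.setFinite
  haveI : Fintype t := htfin.fintype
  have hPt : Submodule.map f V = Submodule.span K t := by rw [hPspan, ← hspan]
  have hcardP : Fintype.card t = finrank K ↥(Submodule.map f V) := by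
    rw [hPt, finrank_span_set_eq_card hli, Set.toFinset_card]
  have hrank1 : ∀ x : t, ∃ b c, (x : B ⊗[K] C) = b ⊗ₜ[K] c := fun x => hS' x (hts x.2)
  choose bb cc hbc using hrank1
  have hPfam : Submodule.map f V = Submodule.span K
      (Set.range fun i : Fin (Fintype.card t) =>
        bb ((Fintype.equivFin t).symm i) ⊗ₜ[K] cc ((Fintype.equivFin t).symm i)) := by
    rw [hPt]
    congr 1
    have h0 : (Set.range fun i : Fin (Fintype.card t) =>
        bb ((Fintype.equivFin t).symm i) ⊗ₜ[K] cc ((Fintype.equivFin t).symm i)) =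
        Set.range (fun x : t => bb x ⊗ₜ[K] cc x) :=
      Function.Surjective.range_comp (Equiv.surjective (Fintype.equivFin ↑t).symm)
        (fun x : t => bb x ⊗ₜ[K] cc x)
    rw [h0, show (fun x : t => bb x ⊗ₜ[K] cc x) = fun x : t => (x : B ⊗[K] C) from
      funext fun x => (hbc x).symm, Subtype.range_coe]
  have hle := hcrux (Fintype.card t) _ _ hPfam
  rw [hcardP] at hle
  have h1 := LinearMap.finrank_range_add_finrank_ker (f ∘ₗ V.subtype)
  rw [LinearMap.range_comp, Submodule.range_subtype] at h1
  have h2 : LinearMap.ker (f ∘ₗ V.subtype) =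
      Submodule.comap V.subtype (V ⊓ LinearMap.ker f) := by
    rw [LinearMap.ker_comp]
    ext x
    simp only [Submodule.mem_comap, Submodule.mem_inf]
    exact ⟨fun h => ⟨x.2, h⟩, fun h => h.2⟩
  have h3 : finrank K ↥(LinearMap.ker (f ∘ₗ V.subtype)) =
      finrank K ↥(V ⊓ LinearMap.ker f) := by
    rw [h2]
    exact LinearEquiv.finrank_eq (Submodule.comapSubtypeEquivOfLe inf_le_left)
  rw [h3] at h1
  omega

end AuxiliaryLemmas

/-- Given a minimal decomposition `V` of `W = W'⊕W''` with associated
minimal spaces `E', E'', F', F''`, if `R(W) < R(W') + R(W'')` then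
`e' < R(W') − dim W'`, `f' < R(W') − dim W'`, `e'' < R(W'') − dim W''` and
`f'' < R(W'') − dim W''` (stated additively to avoid truncated subtraction). -/
theorem dim_bounds_when_additivity_fails
    [FiniteDimensional k B'] [FiniteDimensional k B''] [FiniteDimensional k C']
    [FiniteDimensional k C'']
    (W' : Submodule k (B' ⊗[k] C')) (W'' : Submodule k (B'' ⊗[k] C''))
    (W V : Submodule k ((B' × B'') ⊗[k] (C' × C'')))
    (hW : W = Submodule.map (incl2L k B' B'' C' C'') W' ⊔
      Submodule.map (incl2R k B' B'' C' C'') W'')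
    (hWV : W ≤ V)
    (hVdim : finrank k V = sRank k W)
    (hVspan : ∃ S : Set ((B' × B'') ⊗[k] (C' × C'')),
      (∀ v ∈ S, ∃ b c, v = b ⊗ₜ[k] c) ∧ V = Submodule.span k S)
    (E' : Submodule k B') (E'' : Submodule k B'') (F' : Submodule k C') (F'' : Submodule k C'')
    (hE' : CondE' k B' B'' C' C'' V E' ∧
      ∀ E₀ : Submodule k B', CondE' k B' B'' C' C'' V E₀ → E' ≤ E₀)
    (hE'' : CondE'' k B' B'' C' C'' V E'' ∧
      ∀ E₀ : Submodule k B'', CondE'' k B' B'' C' C'' V E₀ → E'' ≤ E₀)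
    (hF' : CondF' k B' B'' C' C'' V F' ∧
      ∀ F₀ : Submodule k C', CondF' k B' B'' C' C'' V F₀ → F' ≤ F₀)
    (hF'' : CondF'' k B' B'' C' C'' V F'' ∧
      ∀ F₀ : Submodule k C'', CondF'' k B' B'' C' C'' V F₀ → F'' ≤ F₀)
    (hfail : sRank k W < sRank k W' + sRank k W'') :
    (finrank k E' + finrank k W' < sRank k W') ∧
    (finrank k F' + finrank k W' < sRank k W') ∧
    (finrank k E'' + finrank k W'' < sRank k W'') ∧
    (finrank k F'' + finrank k W'' < sRank k W'') := by
  obtain ⟨S, hS1, hS2⟩ := hVspan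
  obtain ⟨hE'c, hE'm⟩ := hE'
  obtain ⟨hE''c, hE''m⟩ := hE''
  obtain ⟨hF'c, hF'm⟩ := hF'
  obtain ⟨hF''c, hF''m⟩ := hF''
  have hWL : Submodule.map (incl2L k B' B'' C' C'') W' ≤ V :=
    le_trans (hW ▸ le_sup_left) hWV
  have hWR : Submodule.map (incl2R k B' B'' C' C'') W'' ≤ V :=
    le_trans (hW ▸ le_sup_right) hWV
  -- Case 1 : E'
  have case1 : sRank k W'' + finrank k E' + finrank k W' ≤ sRank k W := by
    have hf : ∀ (x : B' × B'') (y : C' × C''),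
        ∃ b c, projC' k B' B'' C' C'' (x ⊗ₜ[k] y) = b ⊗ₜ[k] c :=
      fun x y => ⟨x, y.2, by simp [projC']⟩
    have hcomp1 : projC' k B' B'' C' C'' ∘ₗ incl2R k B' B'' C' C'' =
        TensorProduct.map (LinearMap.inr k B' B'') (LinearMap.id : C'' →ₗ[k] C'') := by
      rw [projC', incl2R, ← TensorProduct.map_comp, LinearMap.id_comp,
        LinearMap.snd_comp_inr]
    have hcomp0 : projC' k B' B'' C' C'' ∘ₗ incl2L k B' B'' C' C'' = 0 := by
      apply TensorProduct.ext'; intro x y; simp [projC', incl2L]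
    have hker := ker_bound V (projC' k B' B'' C' C'') W' (incl2L k B' B'' C' C'')
      (tmap_injective _ _ LinearMap.inl_injective LinearMap.inl_injective) hWL hcomp0
    have hcrux : ∀ (m : ℕ) (bb : Fin m → (B' × B'')) (cc : Fin m → C''),
        Submodule.map (projC' k B' B'' C' C'') V =
          Submodule.span k (Set.range fun i => bb i ⊗ₜ[k] cc i) →
        sRank k W'' + finrank k E' ≤ m := by
      intro m bb cc hfam
      have hW₀ : Submodule.map (TensorProduct.map (LinearMap.inr k B' B'')
          (LinearMap.id : C'' →ₗ[k] C'')) W'' ≤ Submodule.map (projC' k B' B'' C' C'') V := by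
        rw [← hcomp1, Submodule.map_comp]
        exact Submodule.map_mono hWR
      have hmin : ∀ D : Submodule k B',
          Submodule.map (projC' k B' B'' C' C'') V ≤ LinearMap.range
            (TensorProduct.map ((D.comap (LinearMap.fst k B' B'')).subtype)
              (LinearMap.id : C'' →ₗ[k] C'')) → finrank k E' ≤ finrank k D := by
        intro D hD
        have hcD : Submodule.comap (LinearMap.fst k B' B'') D = D.prod ⊤ := by
          ext ⟨x, y⟩; simp
        rw [hcD] at hD
        exact Submodule.finrank_mono (hE'm D hD)
      have h := crux_left bb cc _ hfam (LinearMap.fst k B' B'') (LinearMap.inr k B' B'')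
        (LinearMap.snd k B' B'') (LinearMap.snd_comp_inr k B' B'')
        (LinearMap.fst_comp_inr k B' B'') W'' hW₀ (finrank k E') hmin
      simpa using h
    have hasm := assembly V S hS1 hS2 (projC' k B' B'' C' C'') hf
      (sRank k W'') (finrank k E') hcrux
    omega
  -- Case 2 : F'
  have case2 : sRank k W'' + finrank k F' + finrank k W' ≤ sRank k W := by
    have hf : ∀ (x : B' × B'') (y : C' × C''),
        ∃ b c, projB' k B' B'' C' C'' (x ⊗ₜ[k] y) = b ⊗ₜ[k] c :=
      fun x y => ⟨x.2, y, by simp [projB']⟩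
    have hcomp1 : projB' k B' B'' C' C'' ∘ₗ incl2R k B' B'' C' C'' =
        TensorProduct.map (LinearMap.id : B'' →ₗ[k] B'') (LinearMap.inr k C' C'') := by
      rw [projB', incl2R, ← TensorProduct.map_comp, LinearMap.id_comp,
        LinearMap.snd_comp_inr]
    have hcomp0 : projB' k B' B'' C' C'' ∘ₗ incl2L k B' B'' C' C'' = 0 := by
      apply TensorProduct.ext'; intro x y; simp [projB', incl2L]
    have hker := ker_bound V (projB' k B' B'' C' C'') W' (incl2L k B' B'' C' C'')
      (tmap_injective _ _ LinearMap.inl_injective LinearMap.inl_injective) hWL hcomp0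
    have hcrux : ∀ (m : ℕ) (bb : Fin m → B'') (cc : Fin m → (C' × C'')),
        Submodule.map (projB' k B' B'' C' C'') V =
          Submodule.span k (Set.range fun i => bb i ⊗ₜ[k] cc i) →
        sRank k W'' + finrank k F' ≤ m := by
      intro m bb cc hfam
      have hW₀ : Submodule.map (TensorProduct.map (LinearMap.id : B'' →ₗ[k] B'')
          (LinearMap.inr k C' C'')) W'' ≤ Submodule.map (projB' k B' B'' C' C'') V := by
        rw [← hcomp1, Submodule.map_comp]
        exact Submodule.map_mono hWR
      have hmin : ∀ D : Submodule k C',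
          Submodule.map (projB' k B' B'' C' C'') V ≤ LinearMap.range
            (TensorProduct.map (LinearMap.id : B'' →ₗ[k] B'')
              ((D.comap (LinearMap.fst k C' C'')).subtype)) → finrank k F' ≤ finrank k D := by
        intro D hD
        have hcD : Submodule.comap (LinearMap.fst k C' C'') D = D.prod ⊤ := by
          ext ⟨x, y⟩; simp
        rw [hcD] at hD
        exact Submodule.finrank_mono (hF'm D hD)
      have h := crux_right bb cc _ hfam (LinearMap.fst k C' C'') (LinearMap.inr k C' C'')
        (LinearMap.snd k C' C'') (LinearMap.snd_comp_inr k C' C'')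
        (LinearMap.fst_comp_inr k C' C'') W'' hW₀ (finrank k F') hmin
      simpa using h
    have hasm := assembly V S hS1 hS2 (projB' k B' B'' C' C'') hf
      (sRank k W'') (finrank k F') hcrux
    omega
  -- Case 3 : E''
  have case3 : sRank k W' + finrank k E'' + finrank k W'' ≤ sRank k W := by
    have hf : ∀ (x : B' × B'') (y : C' × C''),
        ∃ b c, projC'' k B' B'' C' C'' (x ⊗ₜ[k] y) = b ⊗ₜ[k] c :=
      fun x y => ⟨x, y.1, by simp [projC'']⟩
    have hcomp1 : projC'' k B' B'' C' C'' ∘ₗ incl2L k B' B'' C' C'' =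
        TensorProduct.map (LinearMap.inl k B' B'') (LinearMap.id : C' →ₗ[k] C') := by
      rw [projC'', incl2L, ← TensorProduct.map_comp, LinearMap.id_comp,
        LinearMap.fst_comp_inl]
    have hcomp0 : projC'' k B' B'' C' C'' ∘ₗ incl2R k B' B'' C' C'' = 0 := by
      apply TensorProduct.ext'; intro x y; simp [projC'', incl2R]
    have hker := ker_bound V (projC'' k B' B'' C' C'') W'' (incl2R k B' B'' C' C'')
      (tmap_injective _ _ LinearMap.inr_injective LinearMap.inr_injective) hWR hcomp0
    have hcrux : ∀ (m : ℕ) (bb : Fin m → (B' × B'')) (cc : Fin m → C'),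
        Submodule.map (projC'' k B' B'' C' C'') V =
          Submodule.span k (Set.range fun i => bb i ⊗ₜ[k] cc i) →
        sRank k W' + finrank k E'' ≤ m := by
      intro m bb cc hfam
      have hW₀ : Submodule.map (TensorProduct.map (LinearMap.inl k B' B'')
          (LinearMap.id : C' →ₗ[k] C')) W' ≤ Submodule.map (projC'' k B' B'' C' C'') V := by
        rw [← hcomp1, Submodule.map_comp]
        exact Submodule.map_mono hWL
      have hmin : ∀ D : Submodule k B'',
          Submodule.map (projC'' k B' B'' C' C'') V ≤ LinearMap.range
            (TensorProduct.map ((D.comap (LinearMap.snd k B' B'')).subtype)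
              (LinearMap.id : C' →ₗ[k] C')) → finrank k E'' ≤ finrank k D := by
        intro D hD
        have hcD : Submodule.comap (LinearMap.snd k B' B'') D =
            Submodule.prod ⊤ D := by
          ext ⟨x, y⟩; simp
        rw [hcD] at hD
        exact Submodule.finrank_mono (hE''m D hD)
      have h := crux_left bb cc _ hfam (LinearMap.snd k B' B'') (LinearMap.inl k B' B'')
        (LinearMap.fst k B' B'') (LinearMap.fst_comp_inl k B' B'')
        (LinearMap.snd_comp_inl k B' B'') W' hW₀ (finrank k E'') hmin
      simpa using h
    have hasm := assembly V S hS1 hS2 (projC'' k B' B'' C' C'') hf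
      (sRank k W') (finrank k E'') hcrux
    omega
  -- Case 4 : F''
  have case4 : sRank k W' + finrank k F'' + finrank k W'' ≤ sRank k W := by
    have hf : ∀ (x : B' × B'') (y : C' × C''),
        ∃ b c, projB'' k B' B'' C' C'' (x ⊗ₜ[k] y) = b ⊗ₜ[k] c :=
      fun x y => ⟨x.1, y, by simp [projB'']⟩
    have hcomp1 : projB'' k B' B'' C' C'' ∘ₗ incl2L k B' B'' C' C'' =
        TensorProduct.map (LinearMap.id : B' →ₗ[k] B') (LinearMap.inl k C' C'') := by
      rw [projB'', incl2L, ← TensorProduct.map_comp, LinearMap.id_comp,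
        LinearMap.fst_comp_inl]
    have hcomp0 : projB'' k B' B'' C' C'' ∘ₗ incl2R k B' B'' C' C'' = 0 := by
      apply TensorProduct.ext'; intro x y; simp [projB'', incl2R]
    have hker := ker_bound V (projB'' k B' B'' C' C'') W'' (incl2R k B' B'' C' C'')
      (tmap_injective _ _ LinearMap.inr_injective LinearMap.inr_injective) hWR hcomp0
    have hcrux : ∀ (m : ℕ) (bb : Fin m → B') (cc : Fin m → (C' × C'')),
        Submodule.map (projB'' k B' B'' C' C'') V =
          Submodule.span k (Set.range fun i => bb i ⊗ₜ[k] cc i) →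
        sRank k W' + finrank k F'' ≤ m := by
      intro m bb cc hfam
      have hW₀ : Submodule.map (TensorProduct.map (LinearMap.id : B' →ₗ[k] B')
          (LinearMap.inl k C' C'')) W' ≤ Submodule.map (projB'' k B' B'' C' C'') V := by
        rw [← hcomp1, Submodule.map_comp]
        exact Submodule.map_mono hWL
      have hmin : ∀ D : Submodule k C'',
          Submodule.map (projB'' k B' B'' C' C'') V ≤ LinearMap.range
            (TensorProduct.map (LinearMap.id : B' →ₗ[k] B')
              ((D.comap (LinearMap.snd k C' C'')).subtype)) → finrank k F'' ≤ finrank k D := by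
        intro D hD
        have hcD : Submodule.comap (LinearMap.snd k C' C'') D =
            Submodule.prod ⊤ D := by
          ext ⟨x, y⟩; simp
        rw [hcD] at hD
        exact Submodule.finrank_mono (hF''m D hD)
      have h := crux_right bb cc _ hfam (LinearMap.snd k C' C'') (LinearMap.inl k C' C'')
        (LinearMap.fst k C' C'') (LinearMap.fst_comp_inl k C' C'')
        (LinearMap.snd_comp_inl k C' C'') W' hW₀ (finrank k F'') hmin
      simpa using h
    have hasm := assembly V S hS1 hS2 (projB'' k B' B'' C' C'') hf
      (sRank k W') (finrank k F'') hcrux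
    omega
  exact ⟨by omega, by omega, by omega, by omega⟩
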